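/- If the Alexandroff duplicate AD(X) of a space X is star-K-Scheepers, then X is star-K-Scheepers. -/

import Mathlib

open Set

/-- Star of a set `A` with respect to a family `P`: `St(A,P) = ⋃{B ∈ P : A ∩ B ≠ ∅}`. -/
def st {X : Type*} (A : Set X) (P : Set (Set X)) : Set X :=
  ⋃₀ {B | B ∈ P ∧ (A ∩ B).Nonempty}

/-- `U` is an open cover of the space. -/
def IsOpenCover {X : Type*} [TopologicalSpace X] (U : Set (Set X)) : Prop :=
  (∀ V ∈ U, IsOpen V) ∧ ⋃₀ U = Set.univ

/-- An ω-cover: an open cover such that every finite subset lies in some member. -/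
def IsOmegaCover {X : Type*} [TopologicalSpace X] (U : Set (Set X)) : Prop :=
  IsOpenCover U ∧ ∀ F : Set X, F.Finite → ∃ V ∈ U, F ⊆ V

/-- The star-K-Scheepers property. -/
def StarKScheepers (X : Type*) [TopologicalSpace X] : Prop :=
  ∀ U : ℕ → Set (Set X), (∀ n, IsOpenCover (U n)) →
    ∃ K : ℕ → Set X, (∀ n, IsCompact (K n)) ∧
      IsOmegaCover {S | ∃ n, S = st (K n) (U n)}

/-- The topology of the Alexandroff duplicate `AD(X) = X × Bool`: points `(x, true)` are
isolated, and basic neighbourhoods of `(x, false)` are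
`(U ×ˢ univ) \ {(x, true)}` for `U` an open neighbourhood of `x`. -/
def ADTopology (X : Type*) [TopologicalSpace X] : TopologicalSpace (X × Bool) where
  IsOpen S := ∀ x : X, (x, false) ∈ S →
    ∃ U : Set X, IsOpen U ∧ x ∈ U ∧ (U ×ˢ (Set.univ : Set Bool)) \ {(x, true)} ⊆ S
  isOpen_univ := fun x _ =>
    ⟨Set.univ, isOpen_univ, trivial, fun _ _ => trivial⟩
  isOpen_inter := fun s t hs ht x hx => by
    obtain ⟨U, hU, hxU, hUs⟩ := hs x hx.1
    obtain ⟨V, hV, hxV, hVt⟩ := ht x hx.2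
    refine ⟨U ∩ V, hU.inter hV, ⟨hxU, hxV⟩, fun p hp => ?_⟩
    exact ⟨hUs ⟨⟨hp.1.1.1, hp.1.2⟩, hp.2⟩, hVt ⟨⟨hp.1.1.2, hp.1.2⟩, hp.2⟩⟩
  isOpen_sUnion := fun 𝒮 h x hx => by
    obtain ⟨t, ht𝒮, hxt⟩ := hx
    obtain ⟨U, hU, hxU, hUt⟩ := h t ht𝒮 x hxt
    exact ⟨U, hU, hxU, fun p hp => ⟨t, ht𝒮, hUt hp⟩⟩

/-!
The projection `AD(X) → X` onto the first coordinate is a continuous surjection, and the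
star-K-Scheepers property passes to continuous surjective images: pull the covers of the
image back along the map, push the compact sets obtained upstairs forward, and lift a finite
set of the image through a section of the map.
-/

open Function

lemma st_preimage_subset {X Y : Type*} (f : X → Y) (A : Set X) (P : Set (Set Y)) :
    st A (preimage f '' P) ⊆ f ⁻¹' st (f '' A) P := by
  rintro x ⟨_, ⟨⟨B, hB, rfl⟩, a, haA, haB⟩, hxB⟩
  exact ⟨B, ⟨hB, f a, mem_image_of_mem f haA, haB⟩, hxB⟩

section

variable {X Y : Type*} [TopologicalSpace X] [TopologicalSpace Y]

lemma isOpen_st {A : Set X} {P : Set (Set X)} (hP : ∀ B ∈ P, IsOpen B) : IsOpen (st A P) :=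
  isOpen_sUnion fun B hB => hP B hB.1

lemma IsOpenCover.preimage {U : Set (Set Y)} (hU : IsOpenCover U) {f : X → Y}
    (hf : Continuous f) : IsOpenCover (preimage f '' U) := by
  refine ⟨?_, ?_⟩
  · rintro _ ⟨V, hV, rfl⟩
    exact (hU.1 V hV).preimage hf
  · rw [sUnion_image, ← preimage_iUnion₂, ← sUnion_eq_biUnion, hU.2, preimage_univ]

lemma IsOmegaCover.of_forall_finite {U : Set (Set X)} (hU : ∀ V ∈ U, IsOpen V)
    (hfin : ∀ F : Set X, F.Finite → ∃ V ∈ U, F ⊆ V) : IsOmegaCover U := by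
  refine ⟨⟨hU, eq_univ_of_forall fun x => ?_⟩, hfin⟩
  obtain ⟨V, hV, hxV⟩ := hfin {x} (finite_singleton x)
  exact ⟨V, hV, singleton_subset_iff.1 hxV⟩

theorem StarKScheepers.image (hX : StarKScheepers X) {f : X → Y} (hf : Continuous f)
    (hsurj : Surjective f) : StarKScheepers Y := by
  intro U hU
  obtain ⟨K, hK, -, hKfin⟩ := hX (fun n => preimage f '' U n) fun n => (hU n).preimage hf
  refine ⟨fun n => f '' K n, fun n => (hK n).image hf, .of_forall_finite ?_ fun F hF => ?_⟩
  · rintro _ ⟨n, rfl⟩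
    exact isOpen_st (hU n).1
  · obtain ⟨_, ⟨n, rfl⟩, hn⟩ := hKfin (surjInv hsurj '' F) (hF.image _)
    refine ⟨_, ⟨n, rfl⟩, fun y hy => ?_⟩
    have := st_preimage_subset f (K n) (U n) (hn (mem_image_of_mem _ hy))
    rwa [mem_preimage, surjInv_eq hsurj] at this

lemma continuous_fst_ADTopology : @Continuous _ _ (ADTopology X) _ (Prod.fst : X × Bool → X) :=
  @continuous_def _ _ (ADTopology X) _ _ |>.2 fun s hs _ hx => ⟨s, hs, hx, fun _ hp => hp.1.1⟩

end

/-- If the Alexandroff duplicate of `X` is star-K-Scheepers, then so is `X`. -/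
theorem starKScheepers_of_AD {X : Type*} [TopologicalSpace X]
    (h : @StarKScheepers (X × Bool) (ADTopology X)) : StarKScheepers X :=
  letI := ADTopology X
  h.image continuous_fst_ADTopology Prod.fst_surjective
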